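/- arXiv:2108.03513 — 2 statements merged into one kernel-verified Lean document; each statement's English description precedes it below -/
import Mathlib

section
/- Let p ≥ 2 and ν₀, ν₁ > 0. For all symmetric real 3×3 matrices A and B, the Ladyzhenskaya stress map T(A) = 2(ν₀ + ν₁ |A|_F^{p-2}) A satisfies the monotonicity inequality (T(A) − T(B)) : (A − B) ≥ 2 ν₀ |A − B|_F². -/
/-- Frobenius inner product of two real 3×3 matrices: `A : B = ∑ᵢⱼ Aᵢⱼ Bᵢⱼ`. -/
noncomputable def frobInner (A B : Matrix (Fin 3) (Fin 3) ℝ) : ℝ :=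
  ∑ i : Fin 3, ∑ j : Fin 3, A i j * B i j

/-- Frobenius norm `|A|_F = (A : A)^{1/2}`. -/
noncomputable def frobNorm (A : Matrix (Fin 3) (Fin 3) ℝ) : ℝ :=
  Real.sqrt (frobInner A A)

/-- The Ladyzhenskaya stress map `T(A) = 2 (ν₀ + ν₁ |A|_F^{p-2}) A`. -/
noncomputable def ladyT (p ν₀ ν₁ : ℝ) (A : Matrix (Fin 3) (Fin 3) ℝ) :
    Matrix (Fin 3) (Fin 3) ℝ :=
  (2 * (ν₀ + ν₁ * frobNorm A ^ (p - 2))) • A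

/-!
Write `T(A) − T(B) = 2ν₀ (A − B) + 2ν₁ (|A|^{p-2} A − |B|^{p-2} B)`; it suffices that the second
part pairs nonnegatively with `A − B`. With `q = p − 2 ≥ 0`, Cauchy–Schwarz gives
`⟪‖x‖^q x − ‖y‖^q y, x − y⟫ ≥ (‖x‖^q ‖x‖ − ‖y‖^q ‖y‖) (‖x‖ − ‖y‖)`, and this is `≥ 0` because
`t ↦ t^q t` is monotone on `[0, ∞)`. The argument works in any real inner product space; the
Frobenius pairing on `3 × 3` matrices is the Euclidean one on `ℝ^(3×3)`.
-/

open RealInnerProductSpace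

lemma sub_mul_rpow_mul_sub_rpow_mul_nonneg {a b : ℝ} (ha : 0 ≤ a) (hb : 0 ≤ b) {q : ℝ}
    (hq : 0 ≤ q) : 0 ≤ (a - b) * (a ^ q * a - b ^ q * b) := by
  rcases le_total a b with hab | hba
  · have : a ^ q * a ≤ b ^ q * b :=
      mul_le_mul (Real.rpow_le_rpow ha hab hq) hab ha (Real.rpow_nonneg hb q)
    exact mul_nonneg_of_nonpos_of_nonpos (by linarith) (by linarith)
  · have : b ^ q * b ≤ a ^ q * a :=
      mul_le_mul (Real.rpow_le_rpow hb hba hq) hba hb (Real.rpow_nonneg ha q)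
    exact mul_nonneg (by linarith) (by linarith)

section InnerProductSpace

variable {E : Type*} [NormedAddCommGroup E] [InnerProductSpace ℝ E]

lemma inner_rpow_norm_smul_sub_nonneg {q : ℝ} (hq : 0 ≤ q) (x y : E) :
    0 ≤ ⟪‖x‖ ^ q • x - ‖y‖ ^ q • y, x - y⟫ := by
  have hxq : 0 ≤ ‖x‖ ^ q := Real.rpow_nonneg (norm_nonneg x) q
  have hyq : 0 ≤ ‖y‖ ^ q := Real.rpow_nonneg (norm_nonneg y) q
  have hexpand : ⟪‖x‖ ^ q • x - ‖y‖ ^ q • y, x - y⟫ =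
      ‖x‖ ^ q * ‖x‖ ^ 2 - (‖x‖ ^ q + ‖y‖ ^ q) * ⟪x, y⟫ + ‖y‖ ^ q * ‖y‖ ^ 2 := by
    simp only [inner_sub_left, inner_sub_right, inner_smul_left, real_inner_self_eq_norm_sq,
      real_inner_comm x y, conj_trivial]
    ring
  have hcs : (‖x‖ ^ q + ‖y‖ ^ q) * ⟪x, y⟫ ≤ (‖x‖ ^ q + ‖y‖ ^ q) * (‖x‖ * ‖y‖) :=
    mul_le_mul_of_nonneg_left (real_inner_le_norm x y) (add_nonneg hxq hyq)
  have hmono := sub_mul_rpow_mul_sub_rpow_mul_nonneg (norm_nonneg x) (norm_nonneg y) hq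
  rw [hexpand]
  nlinarith

lemma two_mul_norm_sub_sq_le_inner_stress_sub (ν₀ : ℝ) {ν₁ q : ℝ} (hν₁ : 0 ≤ ν₁)
    (hq : 0 ≤ q) (x y : E) :
    2 * ν₀ * ‖x - y‖ ^ 2 ≤
      ⟪(2 * (ν₀ + ν₁ * ‖x‖ ^ q)) • x - (2 * (ν₀ + ν₁ * ‖y‖ ^ q)) • y, x - y⟫ := by
  have hsplit : (2 * (ν₀ + ν₁ * ‖x‖ ^ q)) • x - (2 * (ν₀ + ν₁ * ‖y‖ ^ q)) • y =
      (2 * ν₀) • (x - y) + (2 * ν₁) • (‖x‖ ^ q • x - ‖y‖ ^ q • y) := by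
    module
  rw [hsplit, inner_add_left, inner_smul_left, inner_smul_left, real_inner_self_eq_norm_sq,
    conj_trivial, conj_trivial]
  have := mul_nonneg hν₁ (inner_rpow_norm_smul_sub_nonneg hq x y)
  linarith

end InnerProductSpace

def Matrix.frobeniusVec : Matrix (Fin 3) (Fin 3) ℝ →ₗ[ℝ] EuclideanSpace ℝ (Fin 3 × Fin 3) where
  toFun A := WithLp.toLp 2 fun ij => A ij.1 ij.2
  map_add' _ _ := rfl
  map_smul' _ _ := rfl

@[simp]
lemma Matrix.frobeniusVec_apply (A : Matrix (Fin 3) (Fin 3) ℝ) (ij : Fin 3 × Fin 3) :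
    A.frobeniusVec ij = A ij.1 ij.2 :=
  rfl

lemma frobInner_eq_inner (A B : Matrix (Fin 3) (Fin 3) ℝ) :
    frobInner A B = ⟪A.frobeniusVec, B.frobeniusVec⟫ := by
  simp [frobInner, PiLp.inner_apply, Fintype.sum_prod_type, mul_comm]

lemma frobNorm_eq_norm (A : Matrix (Fin 3) (Fin 3) ℝ) : frobNorm A = ‖A.frobeniusVec‖ := by
  rw [frobNorm, frobInner_eq_inner, real_inner_self_eq_norm_sq, Real.sqrt_sq (norm_nonneg _)]

theorem ladyT_monotone_general (p ν₀ ν₁ : ℝ) (hp : 2 ≤ p) (hν₁ : 0 < ν₁)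
    (A B : Matrix (Fin 3) (Fin 3) ℝ) :
    2 * ν₀ * frobNorm (A - B) ^ 2 ≤
      frobInner (ladyT p ν₀ ν₁ A - ladyT p ν₀ ν₁ B) (A - B) := by
  simp only [ladyT, frobNorm_eq_norm, frobInner_eq_inner, map_sub, map_smul]
  exact two_mul_norm_sub_sq_le_inner_stress_sub ν₀ hν₁.le (by linarith) _ _

/-- Monotonicity of the Ladyzhenskaya stress:
`(T(A) − T(B)) : (A − B) ≥ 2 ν₀ |A − B|_F²` for symmetric `A`, `B`. -/
theorem ladyT_monotone (p ν₀ ν₁ : ℝ) (hp : 2 ≤ p) (hν₀ : 0 < ν₀) (hν₁ : 0 < ν₁)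
    (A B : Matrix (Fin 3) (Fin 3) ℝ) (hA : A.IsSymm) (hB : B.IsSymm) :
    2 * ν₀ * frobNorm (A - B) ^ 2 ≤
      frobInner (ladyT p ν₀ ν₁ A - ladyT p ν₀ ν₁ B) (A - B) :=
  ladyT_monotone_general p ν₀ ν₁ hp hν₁ A B
end

section
/- Uniform Gronwall lemma: let t₀ ∈ ℝ and r, a₁, a₂, a₃ > 0. Let f be locally absolutely continuous on [t₀, ∞) with locally integrable derivative f′, and let λ, g be nonnegative locally integrable functions on [t₀, ∞) such that f′(t) ≤ λ(t) f(t) + g(t) for almost every t ≥ t₀, and for every t ≥ t₀: ∫_t^{t+r} λ(τ) dτ ≤ a₁, ∫_t^{t+r} g(τ) dτ ≤ a₂, and ∫_t^{t+r} f(τ) dτ ≤ a₃. Then f(t) ≤ (a₃/r + a₂) e^{a₁} for all t ≥ t₀ + r. -/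
/-!
Multiplying `f' ≤ λ f + g` by the integrating factor `exp (-∫_s^τ λ)` and integrating over `[s, t]`
gives the classical Gronwall bound `f t ≤ (f s + ∫_s^t g) exp (∫_s^t λ)`. For `t ≥ t₀ + r`, the
window `[t - r, t]` contains a point `s` where `f s` is at most the mean value `a₃ / r` of `f` on
the window, and the integrals of `g` and `λ` over `[s, t] ⊆ [s, s + r]` are at most `a₂` and `a₁`.
-/

open MeasureTheory Set
open scoped NNReal

theorem LipschitzOnWith.comp_absolutelyContinuousOnInterval {X Y : Type*} [PseudoMetricSpace X]
    [PseudoMetricSpace Y] {φ : X → Y} {K : ℝ≥0} {s : Set X} {f : ℝ → X} {a b : ℝ}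
    (hφ : LipschitzOnWith K φ s) (hf : AbsolutelyContinuousOnInterval f a b)
    (hfs : MapsTo f (uIcc a b) s) : AbsolutelyContinuousOnInterval (φ ∘ f) a b := by
  rw [absolutelyContinuousOnInterval_iff] at hf ⊢
  intro ε hε
  obtain ⟨δ, hδ, hfδ⟩ := hf (ε / (K + 1)) (by positivity)
  refine ⟨δ, hδ, fun E hE hEδ ↦ ?_⟩
  calc ∑ i ∈ Finset.range E.1, dist ((φ ∘ f) (E.2 i).1) ((φ ∘ f) (E.2 i).2)
      ≤ ∑ i ∈ Finset.range E.1, K * dist (f (E.2 i).1) (f (E.2 i).2) :=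
        Finset.sum_le_sum fun i hi ↦
          hφ.dist_le_mul _ (hfs (hE.1 i hi).1) _ (hfs (hE.1 i hi).2)
    _ = K * ∑ i ∈ Finset.range E.1, dist (f (E.2 i).1) (f (E.2 i).2) := by rw [Finset.mul_sum]
    _ ≤ K * (ε / (K + 1)) := by gcongr; exact (hfδ E hE hEδ).le
    _ < ε := by
      rw [mul_div_assoc', div_lt_iff₀ (by positivity)]
      nlinarith

theorem AbsolutelyContinuousOnInterval.exp {f : ℝ → ℝ} {a b : ℝ}
    (hf : AbsolutelyContinuousOnInterval f a b) :
    AbsolutelyContinuousOnInterval (fun x ↦ Real.exp (f x)) a b := by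
  obtain ⟨C, hC⟩ := hf.exists_bound
  obtain ⟨K, hK⟩ := Real.contDiff_exp.contDiffOn.exists_lipschitzOnWith (n := 1) one_ne_zero
    (convex_closedBall 0 C) (isCompact_closedBall 0 C)
  exact hK.comp_absolutelyContinuousOnInterval hf fun x hx ↦ mem_closedBall_zero_iff.2 (hC x hx)

theorem AbsolutelyContinuousOnInterval.le_mul_exp_integral_of_ae_deriv_le {f lam g : ℝ → ℝ}
    {a b : ℝ} (hab : a ≤ b) (hf : AbsolutelyContinuousOnInterval f a b)
    (hlam : IntervalIntegrable lam volume a b) (hlam_nn : ∀ x ∈ Icc a b, 0 ≤ lam x)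
    (hg : IntervalIntegrable g volume a b) (hg_nn : ∀ x ∈ Icc a b, 0 ≤ g x)
    (hderiv : ∀ᵐ x, x ∈ Icc a b → deriv f x ≤ lam x * f x + g x) :
    f b ≤ (f a + ∫ x in a..b, g x) * Real.exp (∫ x in a..b, lam x) := by
  set Λ : ℝ → ℝ := fun x ↦ ∫ y in a..x, lam y
  have hΛ_nn : ∀ x ∈ Icc a b, 0 ≤ Λ x := fun x hx ↦
    intervalIntegral.integral_nonneg hx.1 fun y hy ↦ hlam_nn y ⟨hy.1, hy.2.trans hx.2⟩
  set E : ℝ → ℝ := fun x ↦ Real.exp (-Λ x)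
  have hfE : AbsolutelyContinuousOnInterval (f * E) a b :=
    hf.mul (hlam.absolutelyContinuousOnInterval_intervalIntegral left_mem_uIcc).neg.exp
  have hfE_deriv_le : ∀ᵐ x, x ∈ Icc a b → deriv (f * E) x ≤ g x := by
    filter_upwards [hf.ae_differentiableAt, hlam.ae_hasDerivAt_integral, hderiv]
      with x hfx hΛx hx hmem
    have hmem' : x ∈ uIcc a b := Icc_subset_uIcc hmem
    have hE_le_one : E x ≤ 1 := Real.exp_le_one_iff.2 <| neg_nonpos.2 <| hΛ_nn x hmem
    have hfE_deriv : HasDerivAt (f * E) (deriv f x * E x + f x * (E x * -lam x)) x :=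
      (hfx hmem').hasDerivAt.mul (hΛx hmem' a left_mem_uIcc).neg.exp
    rw [hfE_deriv.deriv]
    calc deriv f x * E x + f x * (E x * -lam x) = (deriv f x - lam x * f x) * E x := by ring
      _ ≤ g x * E x := by gcongr; linarith [hx hmem]
      _ ≤ g x := mul_le_of_le_one_right (hg_nn x hmem) hE_le_one
  have hE_a : E a = 1 := by simp [E, Λ]
  have hftc : f b * E b - f a ≤ ∫ x in a..b, g x :=
    calc f b * E b - f a = f b * E b - f a * E a := by rw [hE_a, mul_one]
      _ = ∫ x in a..b, deriv (f * E) x := hfE.integral_deriv_eq_sub.symm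
      _ ≤ ∫ x in a..b, g x := intervalIntegral.integral_mono_ae_restrict hab
          hfE.intervalIntegrable_deriv hg ((ae_restrict_iff' measurableSet_Icc).2 hfE_deriv_le)
  calc f b = f b * E b * Real.exp (Λ b) := by
        rw [mul_assoc, ← Real.exp_add, neg_add_cancel, Real.exp_zero, mul_one]
    _ ≤ (f a + ∫ x in a..b, g x) * Real.exp (Λ b) := by gcongr; linarith

theorem le_mul_exp_integral_of_eq_const_add_integral {f f' lam g : ℝ → ℝ} {t₀ a b C : ℝ}
    (ht₀a : t₀ ≤ a) (hab : a ≤ b) (hf' : IntervalIntegrable f' volume t₀ b)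
    (hf : ∀ x ∈ Icc a b, f x = C + ∫ y in t₀..x, f' y)
    (hlam : IntervalIntegrable lam volume a b) (hlam_nn : ∀ x ∈ Icc a b, 0 ≤ lam x)
    (hg : IntervalIntegrable g volume a b) (hg_nn : ∀ x ∈ Icc a b, 0 ≤ g x)
    (hineq : ∀ᵐ x, x ∈ Icc a b → f' x ≤ lam x * f x + g x) :
    f b ≤ (f a + ∫ x in a..b, g x) * Real.exp (∫ x in a..b, lam x) := by
  set F : ℝ → ℝ := fun x ↦ C + ∫ y in t₀..x, f' y
  have hFf : ∀ x ∈ Icc a b, F x = f x := fun x hx ↦ (hf x hx).symm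
  have hF : AbsolutelyContinuousOnInterval F a b :=
    ((LipschitzWith.const C).lipschitzOnWith.absolutelyContinuousOnInterval.fun_add
      (hf'.absolutelyContinuousOnInterval_intervalIntegral left_mem_uIcc)).mono
      (uIcc_subset_uIcc (Icc_subset_uIcc ⟨ht₀a, hab⟩) right_mem_uIcc)
  have hF_deriv : ∀ᵐ x, x ∈ Icc a b → deriv F x ≤ lam x * F x + g x := by
    filter_upwards [hf'.ae_hasDerivAt_integral, hineq] with x hF'x hineq_x hx
    rw [((hF'x (Icc_subset_uIcc ⟨ht₀a.trans hx.1, hx.2⟩) t₀ left_mem_uIcc).const_add C).deriv,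
      hFf x hx]
    exact hineq_x hx
  have hgronwall := hF.le_mul_exp_integral_of_ae_deriv_le hab hlam hlam_nn hg hg_nn hF_deriv
  rwa [hFf a ⟨le_rfl, hab⟩, hFf b ⟨hab, le_rfl⟩] at hgronwall

theorem intervalIntegrable_of_forall_integrableOn_Icc {E : Type*} [NormedAddCommGroup E]
    {f : ℝ → E} {t₀ a b : ℝ} (hf : ∀ c, IntegrableOn f (Icc t₀ c)) (ha : t₀ ≤ a) (hb : t₀ ≤ b) :
    IntervalIntegrable f volume a b :=
  ((hf (max a b)).mono_set (Icc_subset_Icc (le_min ha hb) le_rfl)).intervalIntegrable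

theorem exists_mem_Icc_le_div_of_intervalIntegral_le {f : ℝ → ℝ} {a r c : ℝ} (hr : 0 < r)
    (hf : IntervalIntegrable f volume a (a + r)) (h : ∫ x in a..a + r, f x ≤ c) :
    ∃ x ∈ Icc a (a + r), f x ≤ c / r := by
  obtain ⟨x, hx, hfx⟩ := exists_le_setAverage (s := Ioc a (a + r)) (μ := volume)
    (by simp [hr]) (by simp) hf.1
  refine ⟨x, Ioc_subset_Icc_self hx, hfx.trans ?_⟩
  rw [← uIoc_of_le (by linarith), interval_average_eq_div, add_sub_cancel_left]
  gcongr

theorem uniform_gronwall_general (t₀ r a₁ a₂ a₃ : ℝ)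
    (hr : 0 < r) (ha₂ : 0 < a₂) (ha₃ : 0 < a₃)
    (f f' lam g : ℝ → ℝ)
    (hf'int : ∀ b, IntegrableOn f' (Set.Icc t₀ b))
    (hfAC : ∀ t, t₀ ≤ t → f t = f t₀ + ∫ s in t₀..t, f' s)
    (hlamint : ∀ b, IntegrableOn lam (Set.Icc t₀ b))
    (hgint : ∀ b, IntegrableOn g (Set.Icc t₀ b))
    (hfint : ∀ b, IntegrableOn f (Set.Icc t₀ b))
    (hlam_nn : ∀ t, t₀ ≤ t → 0 ≤ lam t)
    (hg_nn : ∀ t, t₀ ≤ t → 0 ≤ g t)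
    (hineq : ∀ᵐ t ∂(volume : Measure ℝ), t₀ ≤ t → f' t ≤ lam t * f t + g t)
    (hlam : ∀ t, t₀ ≤ t → (∫ τ in t..(t + r), lam τ) ≤ a₁)
    (hg : ∀ t, t₀ ≤ t → (∫ τ in t..(t + r), g τ) ≤ a₂)
    (hf : ∀ t, t₀ ≤ t → (∫ τ in t..(t + r), f τ) ≤ a₃) :
    ∀ t, t₀ + r ≤ t → f t ≤ (a₃ / r + a₂) * Real.exp a₁ := by
  intro t ht
  obtain ⟨s, ⟨hts, hst⟩, hfs⟩ : ∃ s ∈ Icc (t - r) t, f s ≤ a₃ / r := by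
    simpa only [sub_add_cancel] using exists_mem_Icc_le_div_of_intervalIntegral_le hr
      (intervalIntegrable_of_forall_integrableOn_Icc hfint (by linarith) (by linarith))
      (hf (t - r) (by linarith))
  have ht₀s : t₀ ≤ s := by linarith
  have integral_le_window : ∀ h : ℝ → ℝ, (∀ c, IntegrableOn h (Icc t₀ c)) →
      (∀ x, t₀ ≤ x → 0 ≤ h x) → ∫ x in s..t, h x ≤ ∫ x in s..s + r, h x :=
    fun h hint hnn ↦ intervalIntegral.integral_mono_interval le_rfl hst (by linarith)
      ((ae_restrict_iff' measurableSet_Ioc).2 <| .of_forall fun x hx ↦ hnn x (ht₀s.trans hx.1.le))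
      (intervalIntegrable_of_forall_integrableOn_Icc hint ht₀s (by linarith))
  calc f t ≤ (f s + ∫ x in s..t, g x) * Real.exp (∫ x in s..t, lam x) :=
        le_mul_exp_integral_of_eq_const_add_integral ht₀s hst
          (intervalIntegrable_of_forall_integrableOn_Icc hf'int le_rfl (by linarith))
          (fun x hx ↦ hfAC x (ht₀s.trans hx.1))
          (intervalIntegrable_of_forall_integrableOn_Icc hlamint ht₀s (by linarith))
          (fun x hx ↦ hlam_nn x (ht₀s.trans hx.1))
          (intervalIntegrable_of_forall_integrableOn_Icc hgint ht₀s (by linarith))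
          (fun x hx ↦ hg_nn x (ht₀s.trans hx.1))
          (hineq.mono fun x hx hmem ↦ hx (ht₀s.trans hmem.1))
    _ ≤ (a₃ / r + a₂) * Real.exp a₁ := by
      gcongr
      · exact (integral_le_window g hgint hg_nn).trans (hg s ht₀s)
      · exact (integral_le_window lam hlamint hlam_nn).trans (hlam s ht₀s)

/-- **Uniform Gronwall lemma.** Let `t₀ ∈ ℝ` and `r, a₁, a₂, a₃ > 0`. Let `f` be locally
absolutely continuous on `[t₀, ∞)` (encoded via the fundamental theorem of calculus:
`f t = f t₀ + ∫_{t₀}^t f'` with `f'` locally integrable), and let `λ, g` be nonnegative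
locally integrable functions on `[t₀, ∞)` such that `f'(t) ≤ λ(t) f(t) + g(t)` for a.e.
`t ≥ t₀`, and for every `t ≥ t₀`:
`∫_t^{t+r} λ ≤ a₁`, `∫_t^{t+r} g ≤ a₂`, `∫_t^{t+r} f ≤ a₃`.
Then `f(t) ≤ (a₃/r + a₂) e^{a₁}` for all `t ≥ t₀ + r`. -/
theorem uniform_gronwall (t₀ r a₁ a₂ a₃ : ℝ)
    (hr : 0 < r) (ha₁ : 0 < a₁) (ha₂ : 0 < a₂) (ha₃ : 0 < a₃)
    (f f' lam g : ℝ → ℝ)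
    (hf'int : ∀ b, IntegrableOn f' (Set.Icc t₀ b))
    (hfAC : ∀ t, t₀ ≤ t → f t = f t₀ + ∫ s in t₀..t, f' s)
    (hlamint : ∀ b, IntegrableOn lam (Set.Icc t₀ b))
    (hgint : ∀ b, IntegrableOn g (Set.Icc t₀ b))
    (hfint : ∀ b, IntegrableOn f (Set.Icc t₀ b))
    (hlam_nn : ∀ t, t₀ ≤ t → 0 ≤ lam t)
    (hg_nn : ∀ t, t₀ ≤ t → 0 ≤ g t)
    (hineq : ∀ᵐ t ∂(volume : Measure ℝ), t₀ ≤ t → f' t ≤ lam t * f t + g t)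
    (hlam : ∀ t, t₀ ≤ t → (∫ τ in t..(t + r), lam τ) ≤ a₁)
    (hg : ∀ t, t₀ ≤ t → (∫ τ in t..(t + r), g τ) ≤ a₂)
    (hf : ∀ t, t₀ ≤ t → (∫ τ in t..(t + r), f τ) ≤ a₃) :
    ∀ t, t₀ + r ≤ t → f t ≤ (a₃ / r + a₂) * Real.exp a₁ :=
  uniform_gronwall_general t₀ r a₁ a₂ a₃ hr ha₂ ha₃ f f' lam g hf'int hfAC hlamint hgint hfint
    hlam_nn hg_nn hineq hlam hg hf
end
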